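/- arXiv:1912.04183 — 3 statements merged into one kernel-verified Lean document; each statement's English description precedes it below -/
import Mathlib

section
/- Under the DeGroot opinion dynamics x[n+1] = T x[n] with T = [[1, 0], [r, Q]] stochastic, Q irreducible, and r having at least one positive entry, the opinions of the ordinary agents converge: y[n] → (I − Q)^{−1} r · x₁[0] as n → ∞, where x[n] = (x₁[n], y[n]) and x₁[0] is the stubborn agent's initial opinion. In particular all agents reach consensus at the stubborn agent's opinion. -/
open Filter Matrix

/-- DeGroot dynamics `x[n+1] = T x[n]` with one stubborn agent: if
`T = [[1,0],[r,Q]]` is stochastic, `Q` is irreducible and `r` has a positive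
entry, then the ordinary agents' opinions satisfy
`y[n] → (I - Q)⁻¹ r ⬝ x₁[0]`, and in particular all agents reach consensus at
the stubborn agent's initial opinion. -/
theorem degroot_stubborn_consensus
    {K : ℕ} (T : Matrix (Fin (K + 1)) (Fin (K + 1)) ℝ)
    (hnonneg : ∀ i j, 0 ≤ T i j)
    (hstoch : ∀ i, ∑ j, T i j = 1)
    (hstub : T 0 0 = 1)
    (hstubrow : ∀ j : Fin K, T 0 j.succ = 0)
    (Q : Matrix (Fin K) (Fin K) ℝ) (hQ : ∀ i j : Fin K, Q i j = T i.succ j.succ)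
    (r : Fin K → ℝ) (hr : ∀ i : Fin K, r i = T i.succ 0)
    (hirred : ∀ i j : Fin K, ∃ n : ℕ, 0 < n ∧ 0 < (Q ^ n) i j)
    (hrpos : ∃ i : Fin K, 0 < r i)
    (x : ℕ → Fin (K + 1) → ℝ)
    (hupd : ∀ n, x (n + 1) = T *ᵥ x n) :
    (∀ i : Fin K, Tendsto (fun n => x n i.succ) atTop
        (nhds (((1 - Q)⁻¹ *ᵥ r) i * x 0 0))) ∧
    (∀ i : Fin (K + 1), Tendsto (fun n => x n i) atTop (nhds (x 0 0))) := by
  obtain ⟨i₀, hi₀⟩ := hrpos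
  haveI : Nonempty (Fin K) := ⟨i₀⟩
  have hKpos : 0 < K := i₀.pos
  have hQnn : ∀ i j, 0 ≤ Q i j := fun i j => (hQ i j) ▸ hnonneg _ _
  have hrnn : ∀ i, 0 ≤ r i := fun i => (hr i) ▸ hnonneg _ _
  have hrow : ∀ j : Fin K, r j + ∑ k, Q j k = 1 := by
    intro j
    have h := hstoch j.succ
    rw [Fin.sum_univ_succ] at h
    rw [hr j]
    simp only [hQ]
    exact h
  -- the stubborn agent never changes
  have hx0 : ∀ n, x n 0 = x 0 0 := by
    intro n
    induction n with
    | zero => rfl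
    | succ n ih =>
      rw [hupd]
      simp [Matrix.mulVec, dotProduct, Fin.sum_univ_succ, hstub, hstubrow, ih]
  -- centered ordinary opinions
  set z : ℕ → Fin K → ℝ := fun n j => x n j.succ - x 0 0 with hzdef
  have hz : ∀ n, z n = (Q ^ n) *ᵥ (z 0) := by
    intro n
    induction n with
    | zero => simp [Matrix.one_mulVec]
    | succ n ih =>
      have hstep : z (n + 1) = Q *ᵥ z n := by
        funext j
        show x (n + 1) j.succ - x 0 0 = _
        rw [hupd]
        simp only [Matrix.mulVec, dotProduct]
        rw [Fin.sum_univ_succ, hx0 n, ← hr j]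
        simp only [← hQ]
        have hsum : ∑ k, Q j k * (z n k) =
            ∑ k, Q j k * x n k.succ - (∑ k, Q j k) * x 0 0 := by
          rw [Finset.sum_mul, ← Finset.sum_sub_distrib]
          exact Finset.sum_congr rfl fun k _ => by
            show Q j k * (x n k.succ - x 0 0) = _
            rw [mul_sub]
        show _ = ∑ k, Q j k * (z n k)
        rw [hsum]
        linear_combination (x 0 0) * (hrow j)
      rw [hstep, ih, Matrix.mulVec_mulVec, ← pow_succ']
  -- nonnegativity of powers
  have hQpow_nn : ∀ n (i j : Fin K), 0 ≤ (Q ^ n) i j := by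
    intro n
    induction n with
    | zero => intro i j; rw [pow_zero]; by_cases h : i = j <;> simp [Matrix.one_apply, h]
    | succ n ih =>
      intro i j
      rw [pow_succ, Matrix.mul_apply]
      exact Finset.sum_nonneg fun k _ => mul_nonneg (ih i k) (hQnn k j)
  -- row sums of powers
  set s : ℕ → Fin K → ℝ := fun n i => ∑ j, (Q ^ n) i j with hsdef
  have hs_nn : ∀ n i, 0 ≤ s n i := fun n i =>
    Finset.sum_nonneg fun j _ => hQpow_nn n i j
  have hs0 : ∀ i, s 0 i = 1 := by
    intro i; simp [hsdef, Matrix.one_apply]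
  have hs1 : ∀ i, s 1 i = 1 - r i := by
    intro i
    have := hrow i
    simp only [hsdef, pow_one]
    linarith
  have hs1le : ∀ i, s 1 i ≤ 1 := fun i => by rw [hs1]; linarith [hrnn i]
  have hadd : ∀ m n (i : Fin K), s (m + n) i = ∑ k, (Q ^ m) i k * s n k := by
    intro m n i
    simp only [hsdef, pow_add, Matrix.mul_apply]
    rw [Finset.sum_comm]
    exact Finset.sum_congr rfl fun k _ => by rw [Finset.mul_sum]
  have hmono : ∀ i, Antitone fun n => s n i := by
    intro i
    apply antitone_nat_of_succ_le
    intro n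
    have h1 : s (n + 1) i = ∑ k, (Q ^ n) i k * s 1 k := hadd n 1 i
    rw [h1]
    calc ∑ k, (Q ^ n) i k * s 1 k ≤ ∑ k, (Q ^ n) i k * 1 :=
          Finset.sum_le_sum fun k _ =>
            mul_le_mul_of_nonneg_left (hs1le k) (hQpow_nn n i k)
      _ = s n i := by simp [hsdef]
  -- every row sum eventually drops below 1
  have hslt : ∀ i : Fin K, ∃ n, 0 < n ∧ s n i < 1 := by
    intro i
    obtain ⟨n, hn, hpos⟩ := hirred i i₀
    refine ⟨n + 1, Nat.succ_pos n, ?_⟩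
    have h1 : s (n + 1) i = ∑ k, (Q ^ n) i k * s 1 k := hadd n 1 i
    have h2 : ∑ k, (Q ^ n) i k * s 1 k < ∑ k, (Q ^ n) i k * 1 := by
      apply Finset.sum_lt_sum
      · intro k _
        exact mul_le_mul_of_nonneg_left (hs1le k) (hQpow_nn n i k)
      · refine ⟨i₀, Finset.mem_univ _, ?_⟩
        have h3 : s 1 i₀ < 1 := by rw [hs1]; linarith
        exact mul_lt_mul_of_pos_left h3 hpos
    have h4 : ∑ k, (Q ^ n) i k * 1 = s n i := by simp [hsdef]
    have h5 : s n i ≤ 1 := (hmono i (Nat.zero_le n)).trans_eq (hs0 i)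
    rw [h1]
    calc ∑ k, (Q ^ n) i k * s 1 k < ∑ k, (Q ^ n) i k * 1 := h2
      _ = s n i := h4
      _ ≤ 1 := h5
  choose nf hnf1 hnf2 using hslt
  set N := Finset.univ.sup nf with hNdef
  have hN : ∀ i, s N i < 1 := fun i =>
    lt_of_le_of_lt (hmono i (Finset.le_sup (Finset.mem_univ i))) (hnf2 i)
  have hNpos : 0 < N := lt_of_lt_of_le (hnf1 i₀) (Finset.le_sup (Finset.mem_univ i₀))
  set c := Finset.univ.sup' Finset.univ_nonempty (fun i => s N i) with hcdef
  have hc1 : c < 1 := by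
    rw [hcdef, Finset.sup'_lt_iff]
    exact fun i _ => hN i
  have hcs : ∀ i, s N i ≤ c := fun i => Finset.le_sup' _ (Finset.mem_univ i)
  have hc0 : 0 ≤ c := le_trans (hs_nn N i₀) (hcs i₀)
  have hpow : ∀ m (i : Fin K), s (N * m) i ≤ c ^ m := by
    intro m
    induction m with
    | zero => intro i; simp [hs0 i]
    | succ m ih =>
      intro i
      have e : N * (m + 1) = N + N * m := by ring
      rw [e, hadd]
      calc ∑ k, (Q ^ N) i k * s (N * m) k ≤ ∑ k, (Q ^ N) i k * c ^ m :=
            Finset.sum_le_sum fun k _ =>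
              mul_le_mul_of_nonneg_left (ih k) (hQpow_nn N i k)
        _ = s N i * c ^ m := by rw [← Finset.sum_mul]
        _ ≤ c * c ^ m := mul_le_mul_of_nonneg_right (hcs i) (pow_nonneg hc0 m)
        _ = c ^ (m + 1) := (pow_succ' c m).symm
  have hs_bound : ∀ n (i : Fin K), s n i ≤ c ^ (n / N) := by
    intro n i
    have h1 : N * (n / N) ≤ n := by
      rw [mul_comm]; exact Nat.div_mul_le_self n N
    exact le_trans (hmono i h1) (hpow (n / N) i)
  have hdivtop : Tendsto (fun n : ℕ => n / N) atTop atTop :=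
    (Filter.map_div_atTop_eq_nat N hNpos).le
  have hstend : ∀ i, Tendsto (fun n => s n i) atTop (nhds 0) := by
    intro i
    exact squeeze_zero (fun n => hs_nn n i) (fun n => hs_bound n i)
      ((tendsto_pow_atTop_nhds_zero_of_lt_one hc0 hc1).comp hdivtop)
  -- powers applied to any vector tend to zero
  have hvec : ∀ (v : Fin K → ℝ) (j : Fin K),
      Tendsto (fun n => ((Q ^ n) *ᵥ v) j) atTop (nhds 0) := by
    intro v j
    set M := ∑ k, |v k| with hMdef
    have hMk : ∀ k, |v k| ≤ M := fun k =>
      Finset.single_le_sum (fun k _ => abs_nonneg (v k)) (Finset.mem_univ k)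
    have hb : ∀ n, |((Q ^ n) *ᵥ v) j| ≤ s n j * M := by
      intro n
      simp only [Matrix.mulVec, dotProduct]
      calc |∑ k, (Q ^ n) j k * v k| ≤ ∑ k, |(Q ^ n) j k * v k| :=
            Finset.abs_sum_le_sum_abs _ _
        _ = ∑ k, (Q ^ n) j k * |v k| := by
            exact Finset.sum_congr rfl fun k _ => by
              rw [abs_mul, abs_of_nonneg (hQpow_nn n j k)]
        _ ≤ ∑ k, (Q ^ n) j k * M :=
            Finset.sum_le_sum fun k _ =>
              mul_le_mul_of_nonneg_left (hMk k) (hQpow_nn n j k)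
        _ = s n j * M := by rw [← Finset.sum_mul]
    have habs : Tendsto (fun n => |((Q ^ n) *ᵥ v) j|) atTop (nhds 0) := by
      apply squeeze_zero (fun n => abs_nonneg _) hb
      have := (hstend j).mul_const M
      rwa [zero_mul] at this
    exact tendsto_zero_iff_abs_tendsto_zero _ |>.mpr habs
  -- ordinary agents converge to x 0 0
  have hzt : ∀ j : Fin K, Tendsto (fun n => x n j.succ) atTop (nhds (x 0 0)) := by
    intro j
    have h0 : Tendsto (fun n => z n j) atTop (nhds 0) := by
      have h := hvec (z 0) j
      have he : (fun n => ((Q ^ n) *ᵥ (z 0)) j) = fun n => z n j := by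
        funext n; rw [hz n]
      rwa [he] at h
    have h1 := h0.add_const (x 0 0)
    rw [zero_add] at h1
    have he : (fun n => z n j + x 0 0) = fun n => x n j.succ := by
      funext n; simp [hzdef]
    rwa [he] at h1
  -- 1 - Q is invertible
  have hunit : IsUnit (1 - Q) := by
    apply Matrix.mulVec_injective_iff_isUnit.mp
    have hker : ∀ w : Fin K → ℝ, (1 - Q) *ᵥ w = 0 → w = 0 := by
      intro w hw
      have hQw : Q *ᵥ w = w := by
        have h := hw
        rw [Matrix.sub_mulVec, Matrix.one_mulVec, sub_eq_zero] at h
        exact h.symm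
      have hpw : ∀ n, (Q ^ n) *ᵥ w = w := by
        intro n
        induction n with
        | zero => simp [Matrix.one_mulVec]
        | succ n ih => rw [pow_succ, ← Matrix.mulVec_mulVec, hQw, ih]
      funext j
      have hconst : (fun n => ((Q ^ n) *ᵥ w) j) = fun _ => w j := by
        funext n; rw [hpw n]
      have h := hvec w j
      rw [hconst] at h
      exact tendsto_nhds_unique tendsto_const_nhds h
    intro u v huv
    have h : (1 - Q) *ᵥ (u - v) = 0 := by
      rw [Matrix.mulVec_sub, huv, sub_self]
    have := hker _ h
    exact sub_eq_zero.mp this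
  have hdet : IsUnit (1 - Q).det := (Matrix.isUnit_iff_isUnit_det _).mp hunit
  have hone : (1 - Q) *ᵥ (fun _ => (1 : ℝ)) = r := by
    funext j
    simp only [Matrix.mulVec, dotProduct, Matrix.sub_apply, Matrix.one_apply,
      mul_one, Finset.sum_sub_distrib, Finset.sum_ite_eq, Finset.mem_univ, if_pos]
    have := hrow j
    linarith
  have hinv : (1 - Q)⁻¹ *ᵥ r = fun _ => (1 : ℝ) := by
    rw [← hone, Matrix.mulVec_mulVec, Matrix.nonsing_inv_mul _ hdet, Matrix.one_mulVec]
  constructor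
  · intro i
    have h1 : ((1 - Q)⁻¹ *ᵥ r) i = 1 := by rw [hinv]
    rw [h1, one_mul]
    exact hzt i
  · intro i
    refine Fin.cases ?_ ?_ i
    · simp only [hx0]
      exact tendsto_const_nhds
    · exact hzt
end

section
/- Consider the random-actions update X[n+1] = (1−α)X[n] + α T A[n] with α ∈ (0,1), T a K×K stochastic matrix, and A[n] conditionally independent Bernoulli actions with A_k[n] ~ Bernoulli(X_k[n]) given X[n]. Fix agents i, j with t_{ij} > 0. If X_j[n] → 0 in probability and E[X_i[n]²(1−X_i[n])²] → 0, then X_i[n] → 0 in probability. -/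
open MeasureTheory Matrix Filter Topology

/-!
If agent `j` does not act at step `n`, then `X_i[n+1] ≤ 1 - α t_ij`; so with
`δ = min ε (α t_ij)`, the event `X_i[n+1] > ε` forces either `A_j[n] = 1` or
`δ ≤ X_i[n+1] ≤ 1 - δ`, where `X_i²(1 - X_i)² ≥ δ⁴`. The first event has probability
`E[A_j[n]] = E[X_j[n]] → 0`, since `X_j[n]` is bounded and tends to `0` in probability,
and the second has probability at most `E[X_i[n+1]²(1 - X_i[n+1])²] / δ⁴ → 0` by Markov.
-/

namespace MeasureTheory

variable {Ω : Type*} {m0 : MeasurableSpace Ω} {μ : Measure Ω} {ι : Type*} {l : Filter ι}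

lemma tendsto_measureReal_iff_tendsto_measure [IsFiniteMeasure μ] {s : ι → Set Ω} :
    Tendsto (fun n => μ.real (s n)) l (𝓝 0) ↔ Tendsto (fun n => μ (s n)) l (𝓝 0) := by
  simp_rw [measureReal_def, ENNReal.tendsto_toReal_zero_iff (fun _ ↦ measure_ne_top _ _)]

lemma integral_le_add_measureReal_lt [IsProbabilityMeasure μ] {f : Ω → ℝ} (hf : Measurable f)
    (hf0 : ∀ ω, 0 ≤ f ω) (hf1 : ∀ ω, f ω ≤ 1) {η : ℝ} (hη : 0 ≤ η) :
    ∫ ω, f ω ∂μ ≤ η + μ.real {ω | η < f ω} := by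
  have hs : MeasurableSet {ω | η < f ω} := measurableSet_lt measurable_const hf
  have hpt : ∀ ω, f ω ≤ η + {ω | η < f ω}.indicator 1 ω := by
    intro ω
    by_cases h : η < f ω
    · simp only [Set.indicator_of_mem (show ω ∈ {ω | η < f ω} from h), Pi.one_apply]
      linarith [hf1 ω]
    · simp only [Set.indicator_of_notMem (show ω ∉ {ω | η < f ω} from h), add_zero]
      exact not_lt.1 h
  have hind : Integrable ({ω | η < f ω}.indicator (1 : Ω → ℝ)) μ :=
    (integrable_const 1).indicator hs
  have hint : Integrable f μ :=
    .of_bound hf.aestronglyMeasurable 1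
      (ae_of_all _ fun ω => by rw [Real.norm_of_nonneg (hf0 ω)]; exact hf1 ω)
  calc ∫ ω, f ω ∂μ ≤ ∫ ω, (η + {ω | η < f ω}.indicator 1 ω) ∂μ :=
        integral_mono hint ((integrable_const η).add hind) hpt
    _ = η + μ.real {ω | η < f ω} := by
        rw [integral_add (integrable_const η) hind,
          integral_indicator_one hs, integral_const, probReal_univ, one_smul]

lemma tendsto_integral_of_tendsto_measureReal_lt [IsProbabilityMeasure μ] {f : ι → Ω → ℝ}
    (hf : ∀ n, Measurable (f n)) (hf0 : ∀ n ω, 0 ≤ f n ω) (hf1 : ∀ n ω, f n ω ≤ 1)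
    (hlim : ∀ ε : ℝ, 0 < ε → Tendsto (fun n => μ.real {ω | ε < f n ω}) l (𝓝 0)) :
    Tendsto (fun n => ∫ ω, f n ω ∂μ) l (𝓝 0) := by
  refine tendsto_order.2 ⟨fun a ha => .of_forall fun n => ha.trans_le
    (integral_nonneg (hf0 n)), fun a ha => ?_⟩
  filter_upwards [(hlim (a / 2) (half_pos ha)).eventually_lt_const (half_pos ha)] with n hn
  linarith [integral_le_add_measureReal_lt (μ := μ) (hf n) (hf0 n) (hf1 n) (half_pos ha).le]

lemma tendsto_measureReal_le_of_tendsto_integral {g : ι → Ω → ℝ} (hg0 : ∀ n, 0 ≤ᵐ[μ] g n)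
    (hg : ∀ n, Integrable (g n) μ) (hlim : Tendsto (fun n => ∫ ω, g n ω ∂μ) l (𝓝 0))
    {c : ℝ} (hc : 0 < c) : Tendsto (fun n => μ.real {ω | c ≤ g n ω}) l (𝓝 0) := by
  refine squeeze_zero (fun n => measureReal_nonneg)
    (fun n => (le_div_iff₀' hc).2 (mul_meas_ge_le_integral_of_nonneg (hg0 n) (hg n) c)) ?_
  simpa using hlim.div_const c

lemma measureReal_eq_one_eq_integral {f : Ω → ℝ} (hf : Measurable f)
    (h01 : ∀ ω, f ω = 0 ∨ f ω = 1) : μ.real {ω | f ω = 1} = ∫ ω, f ω ∂μ := by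
  have hind : f = {ω | f ω = 1}.indicator 1 := by
    funext ω
    rcases h01 ω with h | h <;> simp [Set.indicator, h]
  conv_rhs => rw [hind]
  exact (integral_indicator_one (hf (measurableSet_singleton 1))).symm

lemma integrable_sq_mul_one_sub_sq [IsFiniteMeasure μ] {f : Ω → ℝ} (hf : Measurable f)
    (hf0 : ∀ ω, 0 ≤ f ω) (hf1 : ∀ ω, f ω ≤ 1) :
    Integrable (fun ω => f ω ^ 2 * (1 - f ω) ^ 2) μ := by
  refine .of_bound (by fun_prop) 1 (ae_of_all _ fun ω => ?_)
  rw [Real.norm_of_nonneg (by positivity)]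
  exact mul_le_one₀ (pow_le_one₀ (hf0 ω) (hf1 ω)) (by positivity)
    (pow_le_one₀ (by linarith [hf1 ω]) (by linarith [hf0 ω]))

end MeasureTheory

section Update

variable {κ : Type*} [Fintype κ] [DecidableEq κ] {T : Matrix κ κ ℝ} {a x : κ → ℝ} {i j : κ}

lemma mulVec_apply_le_one_sub (hT0 : ∀ k, 0 ≤ T i k) (hT1 : ∑ k, T i k = 1)
    (ha : ∀ k, a k ≤ 1) (haj : a j = 0) : (T *ᵥ a) i ≤ 1 - T i j := by
  have hsplit : ∀ v : κ → ℝ, ∑ k, v k = v j + ∑ k ∈ Finset.univ.erase j, v k := fun v =>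
    (Finset.add_sum_erase _ v (Finset.mem_univ j)).symm
  have hrest : ∑ k ∈ Finset.univ.erase j, T i k * a k ≤ ∑ k ∈ Finset.univ.erase j, T i k :=
    Finset.sum_le_sum fun k _ => mul_le_of_le_one_right (hT0 k) (ha k)
  rw [hsplit] at hT1
  rw [mulVec, dotProduct, hsplit, haj, mul_zero, zero_add]
  linarith

lemma update_apply_le_one_sub (hT0 : ∀ k, 0 ≤ T i k) (hT1 : ∑ k, T i k = 1)
    {α : ℝ} (hα0 : 0 ≤ α) (hα1 : α ≤ 1) (ha : ∀ k, a k ≤ 1) (hx : x i ≤ 1)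
    (haj : a j = 0) : ((1 - α) • x + α • (T *ᵥ a)) i ≤ 1 - α * T i j := by
  have hT := mulVec_apply_le_one_sub hT0 hT1 ha haj
  simp only [Pi.add_apply, Pi.smul_apply, smul_eq_mul]
  nlinarith

end Update

lemma pow_four_le_sq_mul_one_sub_sq {δ x : ℝ} (hδ : 0 ≤ δ) (hx : δ ≤ x) (hx' : δ ≤ 1 - x) :
    δ ^ 4 ≤ x ^ 2 * (1 - x) ^ 2 := by
  calc δ ^ 4 = (δ * δ) ^ 2 := by ring
    _ ≤ (x * (1 - x)) ^ 2 :=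
        pow_le_pow_left₀ (by positivity) (mul_le_mul hx hx' hδ (hδ.trans hx)) 2
    _ = x ^ 2 * (1 - x) ^ 2 := by ring

theorem propagation_of_convergence_in_probability_general
    {Ω : Type*} {m0 : MeasurableSpace Ω} (μ : Measure Ω) [IsProbabilityMeasure μ]
    {K : ℕ} (T : Matrix (Fin K) (Fin K) ℝ)
    (hTnonneg : ∀ i j, 0 ≤ T i j)
    (hTstoch : ∀ i, ∑ j, T i j = 1)
    (α : ℝ) (hα : α ∈ Set.Ioo (0 : ℝ) 1)
    (X A : ℕ → Ω → Fin K → ℝ)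
    (hXmeas : ∀ n, Measurable (X n)) (hAmeas : ∀ n, Measurable (A n))
    (hX01 : ∀ n ω k, X n ω k ∈ Set.Icc (0 : ℝ) 1)
    (hA01 : ∀ n ω k, A n ω k = 0 ∨ A n ω k = 1)
    (m : ℕ → MeasurableSpace Ω)
    (hle : ∀ n, m n ≤ m0)
    (hmean : ∀ n k, μ[(fun ω => A n ω k)|m n] =ᵐ[μ] fun ω => X n ω k)
    (hupd : ∀ n ω, X (n + 1) ω = (1 - α) • X n ω + α • (T *ᵥ A n ω))
    (i j : Fin K) (hTij : 0 < T i j)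
    (hXj : ∀ ε : ℝ, 0 < ε →
      Tendsto (fun n => μ {ω | ε < X n ω j}) atTop (nhds 0))
    (hXi : Tendsto (fun n => ∫ ω, (X n ω i) ^ 2 * (1 - X n ω i) ^ 2 ∂μ)
      atTop (nhds 0)) :
    ∀ ε : ℝ, 0 < ε →
      Tendsto (fun n => μ {ω | ε < X n ω i}) atTop (nhds 0) := by
  intro ε hε
  obtain ⟨hα0, hα1⟩ := hα
  have hact : Tendsto (fun n => μ.real {ω | A n ω j = 1}) atTop (𝓝 0) := by
    refine (tendsto_integral_of_tendsto_measureReal_lt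
      (fun n => (measurable_pi_apply j).comp (hXmeas n))
      (fun n ω => (hX01 n ω j).1) (fun n ω => (hX01 n ω j).2)
      fun ε hε => tendsto_measureReal_iff_tendsto_measure.2 (hXj ε hε)).congr fun n => ?_
    rw [measureReal_eq_one_eq_integral (f := fun ω => A n ω j)
      ((measurable_pi_apply j).comp (hAmeas n)) (fun ω => hA01 n ω j)]
    exact (integral_congr_ae (hmean n j)).symm.trans (integral_condExp (hle n))
  obtain ⟨δ, hδ, hδε, hδT⟩ : ∃ δ, 0 < δ ∧ δ ≤ ε ∧ δ ≤ α * T i j :=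
    ⟨min ε (α * T i j), lt_min hε (mul_pos hα0 hTij), min_le_left _ _, min_le_right _ _⟩
  have hband : Tendsto (fun n => μ.real {ω | δ ^ 4 ≤ X n ω i ^ 2 * (1 - X n ω i) ^ 2})
      atTop (𝓝 0) := by
    refine tendsto_measureReal_le_of_tendsto_integral
      (fun n => ae_of_all _ fun ω => by positivity) (fun n => ?_) hXi (by positivity)
    exact integrable_sq_mul_one_sub_sq ((measurable_pi_apply i).comp (hXmeas n))
      (fun ω => (hX01 n ω i).1) (fun ω => (hX01 n ω i).2)
  have hstep : ∀ n, μ.real {ω | ε < X (n + 1) ω i} ≤ μ.real {ω | A n ω j = 1}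
      + μ.real {ω | δ ^ 4 ≤ X (n + 1) ω i ^ 2 * (1 - X (n + 1) ω i) ^ 2} := by
    intro n
    refine (measureReal_mono fun ω (hω : ε < X (n + 1) ω i) => ?_).trans
      (measureReal_union_le _ _)
    rcases hA01 n ω j with hAj | hAj
    · have hX1 : X (n + 1) ω i ≤ 1 - α * T i j := by
        rw [hupd]
        exact update_apply_le_one_sub (hTnonneg i) (hTstoch i) hα0.le hα1.le
          (fun k => by rcases hA01 n ω k with h | h <;> simp [h]) (hX01 n ω i).2 hAj
      exact Or.inr (pow_four_le_sq_mul_one_sub_sq hδ.le (by linarith) (by linarith))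
    · exact Or.inl hAj
  rw [← tendsto_measureReal_iff_tendsto_measure, ← tendsto_add_atTop_iff_nat 1]
  exact squeeze_zero (fun n => measureReal_nonneg) hstep
    (by simpa using hact.add (hband.comp (tendsto_add_atTop_nat 1)))

/-- Random-actions update `X[n+1] = (1-α)X[n] + α T A[n]` with conditionally
independent Bernoulli actions: if agent `i` trusts agent `j` (`t_{ij} > 0`),
`X_j[n] → 0` in probability and `E[X_i[n]²(1-X_i[n])²] → 0`, then
`X_i[n] → 0` in probability. -/
theorem propagation_of_convergence_in_probability
    {Ω : Type*} {m0 : MeasurableSpace Ω} (μ : Measure Ω) [IsProbabilityMeasure μ]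
    {K : ℕ} (T : Matrix (Fin K) (Fin K) ℝ)
    (hTnonneg : ∀ i j, 0 ≤ T i j)
    (hTstoch : ∀ i, ∑ j, T i j = 1)
    (α : ℝ) (hα : α ∈ Set.Ioo (0 : ℝ) 1)
    (X A : ℕ → Ω → Fin K → ℝ)
    (hXmeas : ∀ n, Measurable (X n)) (hAmeas : ∀ n, Measurable (A n))
    (hX01 : ∀ n ω k, X n ω k ∈ Set.Icc (0 : ℝ) 1)
    (hA01 : ∀ n ω k, A n ω k = 0 ∨ A n ω k = 1)
    (m : ℕ → MeasurableSpace Ω)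
    (hm : ∀ n, m n = MeasurableSpace.comap (X n) inferInstance)
    (hle : ∀ n, m n ≤ m0)
    (hmean : ∀ n k, μ[(fun ω => A n ω k)|m n] =ᵐ[μ] fun ω => X n ω k)
    (hpair : ∀ n k l, k ≠ l →
      μ[(fun ω => A n ω k * A n ω l)|m n] =ᵐ[μ] fun ω => X n ω k * X n ω l)
    (hupd : ∀ n ω, X (n + 1) ω = (1 - α) • X n ω + α • (T *ᵥ A n ω))
    (i j : Fin K) (hTij : 0 < T i j)
    (hXj : ∀ ε : ℝ, 0 < ε →
      Tendsto (fun n => μ {ω | ε < X n ω j}) atTop (nhds 0))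
    (hXi : Tendsto (fun n => ∫ ω, (X n ω i) ^ 2 * (1 - X n ω i) ^ 2 ∂μ)
      atTop (nhds 0)) :
    ∀ ε : ℝ, 0 < ε →
      Tendsto (fun n => μ {ω | ε < X n ω i}) atTop (nhds 0) :=
  propagation_of_convergence_in_probability_general μ T hTnonneg hTstoch α hα X A hXmeas hAmeas hX01
    hA01 m hle hmean hupd i j hTij hXj hXi
end

section
/- In the random-actions model with a stubborn agent holding opinion 0: let T = [[1,0],[r,Q]] be a K×K stochastic matrix with Q irreducible and r having at least one positive entry, α ∈ (0,1), X[n] = (0, Y[n]) ∈ [0,1]^K updated by X[n+1] = (1−α)X[n] + α T A[n] where the stubborn agent's action is 0 with probability 1 and the remaining actions are conditionally independent Bernoulli(X_k[n]) given X[n]. Then every ordinary agent's opinion converges in probability to 0: for every ε > 0 and every k, P(X_k[n] > ε) → 0 as n → ∞. -/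
/-!
Taking expectations removes the randomness: since the stubborn agent always plays `0` and
`E[A_k[n] | X[n]] = X_k[n]`, the mean opinions `e[n] = E[(X_k[n])_{k ≥ 1}]` of the ordinary agents
follow the deterministic linear recursion `e[n+1] = M e[n]` with `M = (1 - α) I + α Q`.
The matrix `M` is nonnegative, irreducible and substochastic, with a row of sum `< 1` wherever
`r` is positive. Irreducibility lets that deficit leak into every row, so some power `M^N` has all
row sums `< 1`, i.e. `‖M^N‖_∞ < 1`, and `M^n → 0`. Hence `E[X_k[n]] → 0`, and Markov's inequality
gives convergence in probability.
-/

open MeasureTheory Matrix Filter Topology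

theorem tendsto_pow_atTop_nhds_zero_of_norm_pow_succ_lt_one {R : Type*} [SeminormedRing R]
    {x : R} {N : ℕ} (h : ‖x ^ (N + 1)‖ < 1) : Tendsto (fun n => x ^ n) atTop (𝓝 0) := by
  set C := ∑ r ∈ Finset.range (N + 1), ‖x ^ r‖
  have hbound : ∀ᶠ n in atTop, ‖x ^ n‖ ≤ C * ‖x ^ (N + 1)‖ ^ (n / (N + 1)) := by
    filter_upwards [eventually_ge_atTop (N + 1)] with n hn
    calc ‖x ^ n‖ = ‖x ^ (n % (N + 1)) * (x ^ (N + 1)) ^ (n / (N + 1))‖ := by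
          rw [← pow_mul, ← pow_add, Nat.mod_add_div]
      _ ≤ ‖x ^ (n % (N + 1))‖ * ‖x ^ (N + 1)‖ ^ (n / (N + 1)) :=
          (norm_mul_le _ _).trans (by gcongr; exact norm_pow_le' _ (Nat.div_pos hn N.succ_pos))
      _ ≤ C * ‖x ^ (N + 1)‖ ^ (n / (N + 1)) := by
          gcongr
          exact Finset.single_le_sum (fun r _ => norm_nonneg (x ^ r))
            (Finset.mem_range.2 (Nat.mod_lt n N.succ_pos))
  refine squeeze_zero_norm' hbound ?_
  simpa using ((tendsto_pow_atTop_nhds_zero_of_lt_one (norm_nonneg _) h).comp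
    (Nat.tendsto_div_const_atTop N.succ_ne_zero)).const_mul C

namespace Matrix

theorem mulVec_mono_of_nonneg {m n R : Type*} [Fintype n] [Semiring R] [PartialOrder R]
    [IsOrderedRing R] {M : Matrix m n R} (hM : ∀ i j, 0 ≤ M i j) {v w : n → R} (hvw : v ≤ w) :
    M *ᵥ v ≤ M *ᵥ w := fun i =>
  dotProduct_le_dotProduct_of_nonneg_left hvw (hM i)

theorem pow_apply_le_pow_apply {n R : Type*} [Fintype n] [DecidableEq n] [Semiring R]
    [PartialOrder R] [IsOrderedRing R] {A B : Matrix n n R} (hA : ∀ i j, 0 ≤ A i j)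
    (hAB : ∀ i j, A i j ≤ B i j) (k : ℕ) (i j : n) : (A ^ k) i j ≤ (B ^ k) i j := by
  induction k generalizing j with
  | zero => rfl
  | succ k ih =>
    rw [pow_succ, pow_succ, mul_apply, mul_apply]
    exact Finset.sum_le_sum fun l _ => mul_le_mul (ih l) (hAB l j) (hA l j)
      ((pow_apply_nonneg hA k i l).trans (ih l))

theorem tail_mulVec_of_head_eq_zero {R : Type*} [NonUnitalNonAssocSemiring R] {K : ℕ}
    (T : Matrix (Fin (K + 1)) (Fin (K + 1)) R) {a : Fin (K + 1) → R} (ha : a 0 = 0) :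
    Fin.tail (T *ᵥ a) = T.submatrix Fin.succ Fin.succ *ᵥ Fin.tail a := by
  ext i
  simp [mulVec, dotProduct, Fin.sum_univ_succ, ha, Fin.tail]

theorem submatrix_succ_mulVec_one_apply {R : Type*} [Ring R] {K : ℕ}
    (T : Matrix (Fin (K + 1)) (Fin (K + 1)) R) (i : Fin K) :
    (T.submatrix Fin.succ Fin.succ *ᵥ 1) i = ∑ j, T i.succ j - T i.succ 0 := by
  simp [mulVec, dotProduct, Fin.sum_univ_succ]

section Substochastic

variable {n : Type*} [Fintype n] [DecidableEq n] {M : Matrix n n ℝ}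

theorem antitone_pow_mulVec_one (hM : ∀ i j, 0 ≤ M i j) (hsub : M *ᵥ 1 ≤ 1) :
    Antitone fun k : ℕ => M ^ k *ᵥ 1 :=
  antitone_nat_of_succ_le fun k => by
    rw [pow_succ, ← mulVec_mulVec]
    simpa using mulVec_mono_of_nonneg (pow_apply_nonneg hM k) hsub

theorem pow_succ_mulVec_one_lt_one (hM : ∀ i j, 0 ≤ M i j) (hsub : M *ᵥ 1 ≤ 1) {i₀ i : n}
    (hi₀ : (M *ᵥ 1) i₀ < 1) {k : ℕ} (hk : 0 < (M ^ k) i i₀) : (M ^ (k + 1) *ᵥ 1) i < 1 :=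
  calc (M ^ (k + 1) *ᵥ 1) i = ∑ l, (M ^ k) i l * (M *ᵥ 1) l := by
        rw [pow_succ, ← mulVec_mulVec]; rfl
    _ < ∑ l, (M ^ k) i l * 1 :=
        Finset.sum_lt_sum
          (fun l _ => mul_le_mul_of_nonneg_left (hsub l) (pow_apply_nonneg hM k i l))
          ⟨i₀, Finset.mem_univ _, mul_lt_mul_of_pos_left hi₀ hk⟩
    _ = (M ^ k *ᵥ 1) i := rfl
    _ ≤ 1 := by simpa using antitone_pow_mulVec_one hM hsub (Nat.zero_le k) i

theorem exists_pow_succ_mulVec_one_lt_one (hM : ∀ i j, 0 ≤ M i j) (hsub : M *ᵥ 1 ≤ 1)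
    {i₀ : n} (hi₀ : (M *ᵥ 1) i₀ < 1) (hreach : ∀ i, ∃ k, 0 < (M ^ k) i i₀) :
    ∃ N, ∀ i, (M ^ (N + 1) *ᵥ 1) i < 1 := by
  choose k hk using hreach
  refine ⟨Finset.univ.sup k, fun i => ?_⟩
  exact (antitone_pow_mulVec_one hM hsub
    (Nat.succ_le_succ (Finset.le_sup (Finset.mem_univ i))) i).trans_lt
    (pow_succ_mulVec_one_lt_one hM hsub hi₀ (hk i))

attribute [local instance] Matrix.linftyOpNormedRing

theorem linfty_opNorm_lt_one_of_nonneg (hM : ∀ i j, 0 ≤ M i j) (h : ∀ i, (M *ᵥ 1) i < 1) :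
    ‖M‖ < 1 := by
  rw [linfty_opNorm_def, ← NNReal.coe_one, NNReal.coe_lt_coe, Finset.sup_lt_iff (by simp)]
  intro i _
  rw [← NNReal.coe_lt_coe]
  push_cast
  simpa [mulVec, dotProduct, Real.norm_of_nonneg (hM i _)] using h i

theorem IsIrreducible.tendsto_pow_atTop_nhds_zero (hM : M.IsIrreducible) (hsub : M *ᵥ 1 ≤ 1)
    {i₀ : n} (hi₀ : (M *ᵥ 1) i₀ < 1) : Tendsto (fun k => M ^ k) atTop (𝓝 0) := by
  have hreach : ∀ i, ∃ k, 0 < (M ^ k) i i₀ := fun i =>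
    let ⟨k, _, hk⟩ := (isIrreducible_iff_exists_pow_pos hM.nonneg).1 hM i i₀
    ⟨k, hk⟩
  obtain ⟨N, hN⟩ := exists_pow_succ_mulVec_one_lt_one hM.nonneg hsub hi₀ hreach
  exact tendsto_pow_atTop_nhds_zero_of_norm_pow_succ_lt_one
    (linfty_opNorm_lt_one_of_nonneg (pow_apply_nonneg hM.nonneg _) hN)

theorem IsIrreducible.one_sub_smul_one_add_smul (hM : M.IsIrreducible) {α : ℝ} (hα₀ : 0 < α)
    (hα₁ : α ≤ 1) : ((1 - α) • (1 : Matrix n n ℝ) + α • M).IsIrreducible := by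
  have hdom : ∀ i j, (α • M) i j ≤ ((1 - α) • (1 : Matrix n n ℝ) + α • M) i j := fun i j => by
    have : 0 ≤ (1 - α) * (1 : Matrix n n ℝ) i j := by
      rw [one_apply]; split_ifs <;> linarith
    simpa using this
  have hαM : ∀ i j, 0 ≤ (α • M) i j := fun i j => mul_nonneg hα₀.le (hM.nonneg i j)
  rw [isIrreducible_iff_exists_pow_pos fun i j => (hαM i j).trans (hdom i j)]
  intro i j
  obtain ⟨k, hk, hpos⟩ := (isIrreducible_iff_exists_pow_pos hM.nonneg).1 hM i j
  refine ⟨k, hk, lt_of_lt_of_le ?_ (pow_apply_le_pow_apply hαM hdom k i j)⟩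
  rw [smul_pow, smul_apply, smul_eq_mul]
  positivity

theorem IsIrreducible.tendsto_one_sub_smul_one_add_smul_pow (hM : M.IsIrreducible)
    (hsub : M *ᵥ 1 ≤ 1) {i₀ : n} (hi₀ : (M *ᵥ 1) i₀ < 1) {α : ℝ} (hα₀ : 0 < α) (hα₁ : α ≤ 1) :
    Tendsto (fun k => ((1 - α) • (1 : Matrix n n ℝ) + α • M) ^ k) atTop (𝓝 0) := by
  have hrow : ∀ i, (((1 - α) • (1 : Matrix n n ℝ) + α • M) *ᵥ 1) i = 1 - α + α * (M *ᵥ 1) i :=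
    fun i => by simp [add_mulVec, smul_mulVec]
  refine (hM.one_sub_smul_one_add_smul hα₀ hα₁).tendsto_pow_atTop_nhds_zero (i₀ := i₀)
    (fun i => ?_) ?_
  · have := mul_le_mul_of_nonneg_left (hsub i) hα₀.le
    rw [hrow]
    simp only [Pi.one_apply] at this ⊢
    linarith
  · rw [hrow]; nlinarith

theorem tendsto_zero_of_succ_eq_mulVec (hM : Tendsto (fun k => M ^ k) atTop (𝓝 0))
    {e : ℕ → n → ℝ} (he : ∀ k, e (k + 1) = M *ᵥ e k) : Tendsto e atTop (𝓝 0) := by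
  have hpow : ∀ k, e k = M ^ k *ᵥ e 0 := fun k => by
    induction k with
    | zero => simp
    | succ k ih => rw [he, ih, mulVec_mulVec, pow_succ']
  rw [funext hpow, ← zero_mulVec (e 0)]
  exact ((continuous_id.matrix_mulVec continuous_const).tendsto 0).comp hM

end Substochastic

end Matrix

theorem tendsto_measure_lt_of_tendsto_integral {Ω ι : Type*} {m0 : MeasurableSpace Ω}
    {μ : Measure Ω} [IsFiniteMeasure μ] {l : Filter ι} {Z : ι → Ω → ℝ} (hZ : ∀ i, 0 ≤ᵐ[μ] Z i)
    (hint : ∀ i, Integrable (Z i) μ) (hlim : Tendsto (fun i => ∫ ω, Z i ω ∂μ) l (𝓝 0))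
    {ε : ℝ} (hε : 0 < ε) : Tendsto (fun i => μ {ω | ε < Z i ω}) l (𝓝 0) := by
  have hmarkov : ∀ i, μ {ω | ε < Z i ω} ≤ ENNReal.ofReal ((∫ ω, Z i ω ∂μ) / ε) := fun i =>
    calc μ {ω | ε < Z i ω} ≤ μ {ω | ε ≤ Z i ω} := measure_mono fun ω (h : ε < Z i ω) => h.le
      _ ≤ ENNReal.ofReal ((∫ ω, Z i ω ∂μ) / ε) := by
        rw [ENNReal.le_ofReal_iff_toReal_le (measure_ne_top μ _)
          (div_nonneg (integral_nonneg_of_ae (hZ i)) hε.le), le_div_iff₀ hε, mul_comm]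
        exact mul_meas_ge_le_integral_of_nonneg (hZ i) (hint i) ε
  refine tendsto_of_tendsto_of_tendsto_of_le_of_le tendsto_const_nhds ?_ (fun i => zero_le)
    hmarkov
  simpa using ENNReal.tendsto_ofReal (hlim.div_const ε)

theorem integral_mulVec {Ω ι : Type*} [Fintype ι] {m0 : MeasurableSpace Ω} {μ : Measure Ω}
    (Q : Matrix ι ι ℝ) {B : Ω → ι → ℝ} (hB : Integrable B μ) :
    ∫ ω, Q *ᵥ B ω ∂μ = Q *ᵥ ∫ ω, B ω ∂μ :=
  (LinearMap.toContinuousLinearMap (Matrix.mulVecLin Q)).integral_comp_comm hB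

theorem integral_eq_mulVec_integral {Ω ι : Type*} [Fintype ι] [DecidableEq ι]
    {m0 : MeasurableSpace Ω} {μ : Measure Ω} (Q : Matrix ι ι ℝ) (α : ℝ) {Y Y' B : Ω → ι → ℝ}
    (hY : Integrable Y μ) (hB : Integrable B μ)
    (hupd : ∀ ω, Y' ω = (1 - α) • Y ω + α • (Q *ᵥ B ω))
    (hBY : ∫ ω, B ω ∂μ = ∫ ω, Y ω ∂μ) :
    ∫ ω, Y' ω ∂μ = ((1 - α) • 1 + α • Q) *ᵥ ∫ ω, Y ω ∂μ := by
  have hQB : Integrable (fun ω => Q *ᵥ B ω) μ :=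
    (LinearMap.toContinuousLinearMap (Matrix.mulVecLin Q)).integrable_comp hB
  simp_rw [hupd]
  rw [integral_add (f := fun ω => (1 - α) • Y ω) (g := fun ω => α • (Q *ᵥ B ω))
      (hY.smul (1 - α)) (hQB.smul α), integral_smul, integral_smul,
    integral_mulVec Q hB, hBY, add_mulVec, smul_mulVec, smul_mulVec, one_mulVec]

theorem integrable_pi_of_mem_Icc {Ω ι : Type*} [Fintype ι] {m0 : MeasurableSpace Ω}
    {μ : Measure Ω} [IsFiniteMeasure μ] {f : Ω → ι → ℝ} (hf : Measurable f) (a b : ℝ)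
    (hab : ∀ ω i, f ω i ∈ Set.Icc a b) : Integrable f μ :=
  Integrable.of_eval fun i =>
    Integrable.of_mem_Icc a b hf.eval.aemeasurable (ae_of_all _ fun ω => hab ω i)

theorem random_actions_stubborn_herding_general
    {Ω : Type*} {m0 : MeasurableSpace Ω} (μ : Measure Ω) [IsProbabilityMeasure μ]
    {K : ℕ} (T : Matrix (Fin (K + 1)) (Fin (K + 1)) ℝ)
    (hTnonneg : ∀ i j, 0 ≤ T i j)
    (hTstoch : ∀ i, ∑ j, T i j = 1)
    (Q : Matrix (Fin K) (Fin K) ℝ) (hQ : ∀ i j : Fin K, Q i j = T i.succ j.succ)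
    (r : Fin K → ℝ) (hr : ∀ i : Fin K, r i = T i.succ 0)
    (hirred : ∀ i j : Fin K, ∃ n : ℕ, 0 < n ∧ 0 < (Q ^ n) i j)
    (hrpos : ∃ i : Fin K, 0 < r i)
    (α : ℝ) (hα : α ∈ Set.Ioo (0 : ℝ) 1)
    (X A : ℕ → Ω → Fin (K + 1) → ℝ)
    (hXmeas : ∀ n, Measurable (X n)) (hAmeas : ∀ n, Measurable (A n))
    (hX01 : ∀ n ω k, X n ω k ∈ Set.Icc (0 : ℝ) 1)
    (hA01 : ∀ n ω k, A n ω k = 0 ∨ A n ω k = 1)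
    (hAstub : ∀ n ω, A n ω 0 = 0)
    (m : ℕ → MeasurableSpace Ω)
    (hle : ∀ n, m n ≤ m0)
    (hmean : ∀ n k, μ[(fun ω => A n ω k)|m n] =ᵐ[μ] fun ω => X n ω k)
    (hupd : ∀ n ω, X (n + 1) ω = (1 - α) • X n ω + α • (T *ᵥ A n ω)) :
    ∀ ε : ℝ, 0 < ε → ∀ k : Fin K,
      Tendsto (fun n => μ {ω | ε < X n ω k.succ}) atTop (nhds 0) := by
  intro ε hε k
  obtain ⟨i₀, hi₀⟩ := hrpos
  have hQT : Q = T.submatrix Fin.succ Fin.succ := Matrix.ext hQ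
  have hQrow : ∀ i, (Q *ᵥ 1) i = 1 - r i := fun i => by
    rw [hQT, submatrix_succ_mulVec_one_apply, hTstoch, hr]
  have hQirr : Q.IsIrreducible :=
    (isIrreducible_iff_exists_pow_pos fun i j => hQ i j ▸ hTnonneg _ _).2 hirred
  have hpow := hQirr.tendsto_one_sub_smul_one_add_smul_pow (i₀ := i₀)
    (fun i => by rw [hQrow, hr, Pi.one_apply]; linarith [hTnonneg i.succ 0])
    (by rw [hQrow]; linarith) hα.1 hα.2.le
  have hXint : ∀ n, Integrable (fun ω => Fin.tail (X n ω)) μ := fun n =>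
    integrable_pi_of_mem_Icc (measurable_pi_lambda _ fun k => (hXmeas n).eval) 0 1
      fun ω k => hX01 n ω k.succ
  have hAint : ∀ n, Integrable (fun ω => Fin.tail (A n ω)) μ := fun n =>
    integrable_pi_of_mem_Icc (measurable_pi_lambda _ fun k => (hAmeas n).eval) 0 1
      fun ω k => by rcases hA01 n ω k.succ with h | h <;> simp [Fin.tail, h]
  have hstep : ∀ n, ∫ ω, Fin.tail (X (n + 1) ω) ∂μ
      = ((1 - α) • 1 + α • Q) *ᵥ ∫ ω, Fin.tail (X n ω) ∂μ := fun n =>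
    integral_eq_mulVec_integral Q α (hXint n) (hAint n)
      (fun ω => by rw [hupd, hQT, ← tail_mulVec_of_head_eq_zero T (hAstub n ω)]; rfl)
      (by
        ext j
        rw [eval_integral (hAint n).eval, eval_integral (hXint n).eval]
        exact (integral_condExp (hle n)).symm.trans (integral_congr_ae (hmean n j.succ)))
  refine tendsto_measure_lt_of_tendsto_integral
    (fun n => ae_of_all _ fun ω => (hX01 n ω k.succ).1) (fun n => (hXint n).eval k) ?_ hε
  exact (((continuous_apply k).tendsto 0).comp
    (tendsto_zero_of_succ_eq_mulVec hpow hstep)).congr fun n => eval_integral (hXint n).eval k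

/-- Herding in the random-actions model with a stubborn agent: with trust
matrix `T = [[1,0],[r,Q]]` stochastic, `Q` irreducible, `r` having a positive
entry, stubborn agent `0` always playing action `0` and holding opinion `0`,
and the ordinary agents' actions conditionally independent
Bernoulli(`X_k[n]`) given `X[n]`, every ordinary agent's opinion converges in
probability to the stubborn agent's opinion `0`. -/
theorem random_actions_stubborn_herding
    {Ω : Type*} {m0 : MeasurableSpace Ω} (μ : Measure Ω) [IsProbabilityMeasure μ]
    {K : ℕ} (T : Matrix (Fin (K + 1)) (Fin (K + 1)) ℝ)
    (hTnonneg : ∀ i j, 0 ≤ T i j)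
    (hTstoch : ∀ i, ∑ j, T i j = 1)
    (hstub : T 0 0 = 1)
    (hstubrow : ∀ j : Fin K, T 0 j.succ = 0)
    (Q : Matrix (Fin K) (Fin K) ℝ) (hQ : ∀ i j : Fin K, Q i j = T i.succ j.succ)
    (r : Fin K → ℝ) (hr : ∀ i : Fin K, r i = T i.succ 0)
    (hirred : ∀ i j : Fin K, ∃ n : ℕ, 0 < n ∧ 0 < (Q ^ n) i j)
    (hrpos : ∃ i : Fin K, 0 < r i)
    (α : ℝ) (hα : α ∈ Set.Ioo (0 : ℝ) 1)
    (X A : ℕ → Ω → Fin (K + 1) → ℝ)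
    (hXmeas : ∀ n, Measurable (X n)) (hAmeas : ∀ n, Measurable (A n))
    (hX01 : ∀ n ω k, X n ω k ∈ Set.Icc (0 : ℝ) 1)
    (hXstub : ∀ n ω, X n ω 0 = 0)
    (hA01 : ∀ n ω k, A n ω k = 0 ∨ A n ω k = 1)
    (hAstub : ∀ n ω, A n ω 0 = 0)
    (m : ℕ → MeasurableSpace Ω)
    (hm : ∀ n, m n = MeasurableSpace.comap (X n) inferInstance)
    (hle : ∀ n, m n ≤ m0)
    (hmean : ∀ n k, μ[(fun ω => A n ω k)|m n] =ᵐ[μ] fun ω => X n ω k)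
    (hpair : ∀ n k l, k ≠ l →
      μ[(fun ω => A n ω k * A n ω l)|m n] =ᵐ[μ] fun ω => X n ω k * X n ω l)
    (hupd : ∀ n ω, X (n + 1) ω = (1 - α) • X n ω + α • (T *ᵥ A n ω)) :
    ∀ ε : ℝ, 0 < ε → ∀ k : Fin K,
      Tendsto (fun n => μ {ω | ε < X n ω k.succ}) atTop (nhds 0) :=
  random_actions_stubborn_herding_general μ T hTnonneg hTstoch Q hQ r hr hirred hrpos α hα X A
    hXmeas hAmeas hX01 hA01 hAstub m hle hmean hupd
end
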